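/- arXiv:2203.16872 — 7 statements merged into one kernel-verified Lean document; each statement's English description precedes it below -/
import Mathlib

section
/- Let φ be a profile over a finite set N of individuals such that the set of CSR socially qualified individuals f^CSR(φ, N) is nonempty, and let a ∈ N be an individual qualified by all individuals in N (i.e., φ(b, a) = 1 for all b ∈ N). Then for every a' ∈ N with a' ≠ a, a' ∈ f^CSR(φ, N) if and only if there is a directed path from a to a' in the incidence digraph G_φ (the digraph on vertex set N with an arc from x to y iff φ(x, y) = 1). -/
open Finset

def csrStep {α : Type*} [DecidableEq α] (φ : α → α → Bool) (W K : Finset α) : Finset α :=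
  K ∪ W.filter (fun a => ∃ a' ∈ K, φ a' a = true)

def csrIter {α : Type*} [DecidableEq α] (φ : α → α → Bool) (W : Finset α) : ℕ → Finset α
  | 0 => W.filter (fun a => ∀ a' ∈ W, φ a' a = true)
  | n + 1 => csrStep φ W (csrIter φ W n)

/-- The consensus-start-respecting rule. -/
def fCSR {α : Type*} [DecidableEq α] (φ : α → α → Bool) (W : Finset α) : Finset α :=
  csrIter φ W W.card

def lsrIter {α : Type*} [DecidableEq α] (φ : α → α → Bool) (W : Finset α) : ℕ → Finset α
  | 0 => W.filter (fun a => φ a a = true)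
  | n + 1 => csrStep φ W (lsrIter φ W n)

/-- The liberal-start-respecting rule. -/
def fLSR {α : Type*} [DecidableEq α] (φ : α → α → Bool) (W : Finset α) : Finset α :=
  lsrIter φ W W.card

/-!
Every individual qualified at stage `ℓ` of the CSR iteration is reached from `a` by a path:
the consensus start `K₀` is one arc away from `a` (everyone, `a` included, qualifies its members),
and each later stage only adds out-neighbours of earlier ones. Conversely, `a ∈ K₀`, and the
iteration is stationary from stage `|N|` on (each non-stationary step adds an individual), so
`f^CSR` is closed under arcs and contains everything reachable from `a`.
-/

namespace CSR

variable {α : Type*} [DecidableEq α] (φ : α → α → Bool) (W : Finset α)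

theorem csrIter_subset_succ (n : ℕ) : csrIter φ W n ⊆ csrIter φ W (n + 1) :=
  subset_union_left

theorem csrIter_monotone : Monotone (csrIter φ W) :=
  monotone_nat_of_le_succ (csrIter_subset_succ φ W)

theorem csrIter_subset (n : ℕ) : csrIter φ W n ⊆ W := by
  induction n with
  | zero => exact filter_subset _ _
  | succ n ih => exact union_subset ih (filter_subset _ _)

theorem csrIter_eq_of_succ_eq {n : ℕ} (h : csrIter φ W (n + 1) = csrIter φ W n) :
    ∀ m, n ≤ m → csrIter φ W m = csrIter φ W n := by
  intro m hm
  induction m, hm using Nat.le_induction with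
  | base => rfl
  | succ m _ ih =>
    change csrStep φ W (csrIter φ W m) = _
    rw [ih]
    exact h

theorem le_card_csrIter_of_succ_ne {m : ℕ} (h : csrIter φ W (m + 1) ≠ csrIter φ W m) :
    ∀ n ≤ m + 1, n ≤ #(csrIter φ W n) := by
  intro n hn
  induction n with
  | zero => exact Nat.zero_le _
  | succ n ih =>
    have hgrow : csrIter φ W n ⊂ csrIter φ W (n + 1) := by
      refine Finset.ssubset_iff_subset_ne.mpr ⟨csrIter_subset_succ φ W n, fun heq => h ?_⟩
      rw [csrIter_eq_of_succ_eq φ W heq.symm (m + 1) (by omega),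
        csrIter_eq_of_succ_eq φ W heq.symm m (by omega)]
    have := card_lt_card hgrow
    have := ih (by omega)
    omega

theorem csrIter_card_succ : csrIter φ W (#W + 1) = csrIter φ W #W := by
  by_contra h
  have hlarge := le_card_csrIter_of_succ_ne φ W h (#W + 1) le_rfl
  have hsmall := card_le_card (csrIter_subset φ W (#W + 1))
  omega

theorem mem_fCSR_of_rel {x y : α} (hx : x ∈ fCSR φ W) (hy : y ∈ W) (hxy : φ x y = true) :
    y ∈ fCSR φ W := by
  have : y ∈ csrStep φ W (fCSR φ W) := mem_union_right _ (mem_filter.mpr ⟨hy, x, hx, hxy⟩)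
  rwa [fCSR, ← csrIter_card_succ]

theorem reflTransGen_of_mem_csrIter {a : α} (ha : a ∈ W) :
    ∀ n, ∀ x ∈ csrIter φ W n, Relation.ReflTransGen (fun x y => φ x y = true) a x := by
  intro n
  induction n with
  | zero => exact fun x hx => .single ((mem_filter.mp hx).2 a ha)
  | succ n ih =>
    intro x hx
    rcases mem_union.mp hx with hx | hx
    · exact ih x hx
    · obtain ⟨x', hx', hφ⟩ := (mem_filter.mp hx).2
      exact (ih x' hx').tail hφ

end CSR

open CSR in
theorem csr_reachability_characterization_general
    {α : Type*} [DecidableEq α] [Fintype α] (φ : α → α → Bool) (a : α)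
    (ha : ∀ b : α, φ b a = true)
    (a' : α) :
    a' ∈ fCSR φ (Finset.univ : Finset α) ↔
      Relation.ReflTransGen (fun x y => φ x y = true) a a' := by
  constructor
  · exact reflTransGen_of_mem_csrIter φ univ (mem_univ a) _ a'
  · intro h
    induction h with
    | refl => exact csrIter_monotone φ univ (Nat.zero_le _) (by simp [csrIter, ha])
    | tail _ hxy ih => exact mem_fCSR_of_rel φ univ ih (mem_univ _) hxy

theorem csr_reachability_characterization
    {α : Type*} [DecidableEq α] [Fintype α] (φ : α → α → Bool) (a : α)
    (hne : (fCSR φ (Finset.univ : Finset α)).Nonempty)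
    (ha : ∀ b : α, φ b a = true)
    (a' : α) (hne' : a' ≠ a) :
    a' ∈ fCSR φ (Finset.univ : Finset α) ↔
      Relation.ReflTransGen (fun x y => φ x y = true) a a' :=
  csr_reachability_characterization_general φ a ha a'
end

section
/- Let φ be a profile over a finite set N which is qualifying consecutive (QC) with respect to a linear order ▷ on N. Then all individuals in f^CSR(φ, N) are consecutive in the order ▷; that is, f^CSR(φ, N) forms an interval with respect to ▷. -/
open Finset

/-!
If nobody is qualified by everyone, `f^CSR` is empty. Otherwise fix such a consensus individual `c`.
Every socially qualified individual qualifies `c`, so by QC it qualifies everyone between `c` and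
any of its qualifiees. Hence each stage of the iteration is star-shaped around `c` (it contains
everyone between `c` and any of its members), and in a linear order a set that is star-shaped
around one of its points is an interval.
-/

def StarConvexIn {α : Type*} [LinearOrder α] (W : Finset α) (c : α) (K : Finset α) : Prop :=
  ∀ x ∈ K, ∀ w ∈ W, w ∈ Set.uIcc x c → w ∈ K

section CSR

variable {α : Type*} [LinearOrder α] {φ : α → α → Bool} {W K : Finset α} {c : α}

theorem csrIter_subset (n : ℕ) : csrIter φ W n ⊆ W := by
  induction n with
  | zero => exact filter_subset _ _
  | succ n ih => exact union_subset ih (filter_subset _ _)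

theorem csrIter_eq_empty (h₀ : csrIter φ W 0 = ∅) (n : ℕ) : csrIter φ W n = ∅ := by
  induction n with
  | zero => exact h₀
  | succ n ih => simp [csrIter, csrStep, ih]

theorem starConvexIn_csrIter_zero (hφ : ∀ a, Set.OrdConnected {x | φ a x = true})
    (hc : c ∈ csrIter φ W 0) : StarConvexIn W c (csrIter φ W 0) := by
  simp only [csrIter, mem_filter] at hc
  simp only [StarConvexIn, csrIter, mem_filter]
  exact fun x hx w hw hwx => ⟨hw, fun a ha => (hφ a).uIcc_subset (hx.2 a ha) (hc.2 a ha) hwx⟩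

theorem starConvexIn_csrStep (hφ : ∀ a, Set.OrdConnected {x | φ a x = true})
    (hKc : ∀ a ∈ K, φ a c = true) (hK : StarConvexIn W c K) :
    StarConvexIn W c (csrStep φ W K) := by
  simp only [StarConvexIn, csrStep, mem_union, mem_filter]
  rintro x (hxK | ⟨-, a, haK, hax⟩) w hw hwx
  · exact Or.inl (hK x hxK w hw hwx)
  · exact Or.inr ⟨hw, a, haK, (hφ a).uIcc_subset hax (hKc a haK) hwx⟩

theorem starConvexIn_csrIter (hφ : ∀ a, Set.OrdConnected {x | φ a x = true})
    (hc : c ∈ csrIter φ W 0) (n : ℕ) : StarConvexIn W c (csrIter φ W n) := by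
  induction n with
  | zero => exact starConvexIn_csrIter_zero hφ hc
  | succ n ih =>
    have hqualifies_c : ∀ a ∈ csrIter φ W n, φ a c = true := by
      simp only [csrIter, mem_filter] at hc
      exact fun a ha => hc.2 a (csrIter_subset n ha)
    exact starConvexIn_csrStep hφ hqualifies_c ih

theorem mem_csrIter_of_le_of_le (hφ : ∀ a, Set.OrdConnected {x | φ a x = true}) {n : ℕ}
    {x y w : α} (hx : x ∈ csrIter φ W n) (hy : y ∈ csrIter φ W n) (hw : w ∈ W) (hxw : x ≤ w)
    (hwy : w ≤ y) : w ∈ csrIter φ W n := by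
  obtain h₀ | ⟨c, hc⟩ := (csrIter φ W 0).eq_empty_or_nonempty
  · simp [csrIter_eq_empty h₀] at hx
  have hstar := starConvexIn_csrIter hφ hc n
  rcases le_total w c with hwc | hcw
  · exact hstar x hx w hw (Set.mem_uIcc.2 (Or.inl ⟨hxw, hwc⟩))
  · exact hstar y hy w hw (Set.mem_uIcc.2 (Or.inr ⟨hcw, hwy⟩))

end CSR

theorem csr_interval_of_qc
    {α : Type*} [LinearOrder α] [Fintype α] (φ : α → α → Bool)
    (hqc : ∀ a x y w : α, x ≤ w → w ≤ y → φ a x = true → φ a y = true → φ a w = true) :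
    ∀ x y w : α, x ≤ w → w ≤ y →
      x ∈ fCSR φ (Finset.univ : Finset α) → y ∈ fCSR φ (Finset.univ : Finset α) →
      w ∈ fCSR φ (Finset.univ : Finset α) := by
  have hφ : ∀ a, Set.OrdConnected {x | φ a x = true} :=
    fun a => ⟨fun x hx y hy _ hw => hqc a x y _ hw.1 hw.2 hx hy⟩
  exact fun x y w hxw hwy hx hy => mem_csrIter_of_le_of_le hφ hx hy (mem_univ w) hxw hwy
end

section
/- Correctness of the RBDS-to-GCAI reduction for f^CSR: Let G = (R ∪ B, E) be a bipartite graph with parts R and B, both nonempty. Define a profile φ over N = R ∪ B by: every b ∈ B qualifies all individuals in R and disqualifies all individuals in B; every r ∈ R qualifies all individuals in R and qualifies b ∈ B iff r and b are adjacent in G. Then for any R' ⊆ R: B ⊆ f^CSR(φ, B ∪ R') if and only if every vertex in B has a neighbor in R' (i.e., R' dominates B). -/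
/-!
On `W = B ∪ R'` the consensus start is exactly `R'`: everyone qualifies every member of `R`,
while any member of `B` disqualifies all of `B`. One step then adds the members of `B` qualified
by some `r ∈ R'`, i.e. the neighbours of `R'`, and nothing more can be added afterwards, because
members of `B` qualify no one in `B`. Hence `f^CSR(φ, B ∪ R') = R' ∪ N(R')`, which contains `B`
exactly when `R'` dominates `B`.
-/

open Finset

theorem Finset.subset_union_filter_iff_of_disjoint {α : Type*} [DecidableEq α]
    {A B : Finset α} {p : α → Prop} [DecidablePred p] (h : Disjoint A B) :
    B ⊆ A ∪ B.filter p ↔ ∀ b ∈ B, p b := by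
  constructor
  · intro hB b hb
    rcases mem_union.1 (hB hb) with ha | hp
    · exact absurd hb (disjoint_left.1 h ha)
    · exact (mem_filter.1 hp).2
  · intro hp b hb
    exact mem_union_right _ (mem_filter.2 ⟨hb, hp b hb⟩)

section CSR

variable {α : Type*} [DecidableEq α] {φ : α → α → Bool} {W : Finset α}

theorem csrIter_eq_of_csrStep_eq {n : ℕ} (h : csrStep φ W (csrIter φ W n) = csrIter φ W n)
    {m : ℕ} (hnm : n ≤ m) : csrIter φ W m = csrIter φ W n := by
  induction m, hnm using Nat.le_induction with
  | base => rfl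
  | succ m _ ih => rw [csrIter, ih, h]

theorem fCSR_eq_csrIter_of_csrStep_eq {n : ℕ} (h : csrStep φ W (csrIter φ W n) = csrIter φ W n)
    (hn : n ≤ W.card) : fCSR φ W = csrIter φ W n :=
  csrIter_eq_of_csrStep_eq h hn

end CSR

section Reduction

variable {α : Type*} [DecidableEq α] {R B R' : Finset α} {φ : α → α → Bool}

theorem csrIter_zero_of_reduction (hB : B.Nonempty) (hR' : R' ⊆ R)
    (h1 : ∀ x ∈ R ∪ B, ∀ r ∈ R, φ x r = true) (h2 : ∀ b ∈ B, ∀ b' ∈ B, φ b b' = false) :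
    csrIter φ (B ∪ R') 0 = R' := by
  obtain ⟨b₀, hb₀⟩ := hB
  ext a
  simp only [csrIter, mem_filter, mem_union]
  constructor
  · rintro ⟨ha | ha, hq⟩
    · simpa [h2 b₀ hb₀ a ha] using hq b₀ (Or.inl hb₀)
    · exact ha
  · intro ha
    refine ⟨Or.inr ha, fun x hx => h1 x ?_ a (hR' ha)⟩
    rcases hx with hx | hx
    exacts [mem_union_right _ hx, mem_union_left _ (hR' hx)]

theorem csrStep_of_reduction (h2 : ∀ b ∈ B, ∀ b' ∈ B, φ b b' = false) {K : Finset α}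
    (hK : R' ⊆ K) (hKD : K ⊆ R' ∪ B.filter (fun b => ∃ r ∈ R', φ r b = true)) :
    csrStep φ (B ∪ R') K = R' ∪ B.filter (fun b => ∃ r ∈ R', φ r b = true) := by
  ext a
  simp only [csrStep, mem_union, mem_filter]
  constructor
  · rintro (ha | ⟨ha | ha, a', ha', hφ⟩)
    · simpa only [mem_union, mem_filter] using hKD ha
    · rcases mem_union.1 (hKD ha') with ha'R | ha'B
      · exact Or.inr ⟨ha, a', ha'R, hφ⟩
      · simp [h2 a' (mem_filter.1 ha'B).1 a ha] at hφ
    · exact Or.inl ha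
  · rintro (ha | ⟨ha, r, hr, hφ⟩)
    · exact Or.inl (hK ha)
    · exact Or.inr ⟨Or.inl ha, r, hK hr, hφ⟩

theorem fCSR_of_reduction (hB : B.Nonempty) (hR' : R' ⊆ R)
    (h1 : ∀ x ∈ R ∪ B, ∀ r ∈ R, φ x r = true) (h2 : ∀ b ∈ B, ∀ b' ∈ B, φ b b' = false) :
    fCSR φ (B ∪ R') = R' ∪ B.filter (fun b => ∃ r ∈ R', φ r b = true) := by
  have hone : csrIter φ (B ∪ R') 1 = R' ∪ B.filter (fun b => ∃ r ∈ R', φ r b = true) := by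
    rw [csrIter, csrIter_zero_of_reduction hB hR' h1 h2]
    exact csrStep_of_reduction h2 subset_rfl subset_union_left
  have hfixed : csrStep φ (B ∪ R') (csrIter φ (B ∪ R') 1) = csrIter φ (B ∪ R') 1 := by
    rw [hone]
    exact csrStep_of_reduction h2 subset_union_left subset_rfl
  have hcard : 1 ≤ (B ∪ R').card :=
    card_pos.2 (hB.mono subset_union_left)
  rw [fCSR_eq_csrIter_of_csrStep_eq hfixed hcard, hone]

end Reduction

theorem rbds_to_gcai_csr_correct_general
    {α : Type*} [DecidableEq α] (R B : Finset α) (adj : α → α → Prop)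
    (hB : B.Nonempty) (hdisj : Disjoint R B)
    (φ : α → α → Bool)
    (h1 : ∀ x ∈ R ∪ B, ∀ r ∈ R, φ x r = true)
    (h2 : ∀ b ∈ B, ∀ b' ∈ B, φ b b' = false)
    (h3 : ∀ r ∈ R, ∀ b ∈ B, (φ r b = true ↔ adj r b)) :
    ∀ R' ⊆ R, (B ⊆ fCSR φ (B ∪ R') ↔ ∀ b ∈ B, ∃ r ∈ R', adj r b) := by
  intro R' hR'
  rw [fCSR_of_reduction hB hR' h1 h2,
    subset_union_filter_iff_of_disjoint (disjoint_of_subset_left hR' hdisj)]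
  refine forall₂_congr fun b hb => ?_
  exact exists_congr fun r => and_congr_right fun hr => h3 r (hR' hr) b hb

theorem rbds_to_gcai_csr_correct
    {α : Type*} [DecidableEq α] (R B : Finset α) (adj : α → α → Prop)
    (hR : R.Nonempty) (hB : B.Nonempty) (hdisj : Disjoint R B)
    (φ : α → α → Bool)
    (h1 : ∀ x ∈ R ∪ B, ∀ r ∈ R, φ x r = true)
    (h2 : ∀ b ∈ B, ∀ b' ∈ B, φ b b' = false)
    (h3 : ∀ r ∈ R, ∀ b ∈ B, (φ r b = true ↔ adj r b)) :
    ∀ R' ⊆ R, (B ⊆ fCSR φ (B ∪ R') ↔ ∀ b ∈ B, ∃ r ∈ R', adj r b) :=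
  rbds_to_gcai_csr_correct_general R B adj hB hdisj φ h1 h2 h3
end

section
/- Correctness of the RBDS-to-GCAI reduction for f^LSR: Let G = (R ∪ B, E) be a bipartite graph. For each r ∈ R of degree d(r), create individuals r(0), r(1), …, r(d(r)). Define N = B ∪ {r(i) : r ∈ R, 0 ≤ i ≤ d(r)}, T = B ∪ {r(i) : r ∈ R, 1 ≤ i ≤ d(r)}, and profile φ: r(0) qualifies r(0), r(1), …, r(d(r)); the individuals r(1), …, r(d(r)) each qualify exactly one neighbor of r in G so that each neighbor of r is qualified by exactly one of them; all other qualifications are 0. Then for any U ⊆ N \ T: B ⊆ f^LSR(φ, T ∪ U) if and only if the set R' = {r ∈ R : r(0) ∈ U} dominates B in G. -/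
/-!
`fLSR φ W` is the least subset of `W` that contains the self-qualified members of `W` and is
closed under qualification within `W`. In the reduction the only self-qualified individuals are
the `r(0)` in `U`, each such `r(0)` qualifies `r(1), …, r(d(r))`, these qualify exactly the
neighbours of `r`, and members of `B` qualify nobody. Hence the closure of `U` contains `B`
exactly when every `b ∈ B` has a neighbour `r` with `r(0) ∈ U`.
-/

open Finset

section LSR

variable {α : Type*} [DecidableEq α] (φ : α → α → Bool) (W : Finset α)

theorem lsrIter_subset : ∀ n, lsrIter φ W n ⊆ W
  | 0 => filter_subset _ _
  | n + 1 => union_subset (lsrIter_subset n) (filter_subset _ _)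

theorem lsrIter_subset_succ (n : ℕ) : lsrIter φ W n ⊆ lsrIter φ W (n + 1) :=
  subset_union_left

theorem lsrIter_mono : Monotone (lsrIter φ W) :=
  monotone_nat_of_le_succ (lsrIter_subset_succ φ W)

theorem lsrIter_eq_of_succ_eq {n : ℕ} (h : lsrIter φ W (n + 1) = lsrIter φ W n) :
    ∀ m, n ≤ m → lsrIter φ W m = lsrIter φ W n := by
  intro m hm
  induction m, hm using Nat.le_induction with
  | base => rfl
  | succ m _ ih =>
    change csrStep φ W (lsrIter φ W m) = _
    rw [ih]
    exact h

/-- A strictly increasing chain of subsets of `W` has at most `#W + 1` terms. -/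
theorem exists_le_card_lsrIter_succ_eq :
    ∃ n ≤ #W, lsrIter φ W (n + 1) = lsrIter φ W n := by
  by_contra! hgrow
  have hcard : ∀ n ≤ #W + 1, n ≤ #(lsrIter φ W n) := by
    intro n hn
    induction n with
    | zero => exact Nat.zero_le _
    | succ n ih =>
      have hlt := card_lt_card
        ((lsrIter_subset_succ φ W n).ssubset_of_ne (hgrow n (by omega)).symm)
      have := ih (by omega)
      omega
  have := (hcard _ le_rfl).trans (card_le_card (lsrIter_subset φ W _))
  omega

theorem lsrIter_subset_fLSR (n : ℕ) : lsrIter φ W n ⊆ fLSR φ W := by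
  obtain ⟨k, hk, hstable⟩ := exists_le_card_lsrIter_succ_eq φ W
  have hfix := lsrIter_eq_of_succ_eq φ W hstable
  calc lsrIter φ W n ⊆ lsrIter φ W (max n k) := lsrIter_mono φ W (le_max_left _ _)
    _ = lsrIter φ W k := hfix _ (le_max_right _ _)
    _ = fLSR φ W := (hfix _ hk).symm

theorem mem_fLSR_of_self {a : α} (ha : a ∈ W) (haa : φ a a = true) : a ∈ fLSR φ W :=
  lsrIter_subset_fLSR φ W 0 (mem_filter.mpr ⟨ha, haa⟩)

theorem mem_fLSR_of_qualified {a x : α} (ha : a ∈ fLSR φ W) (hx : x ∈ W)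
    (hax : φ a x = true) : x ∈ fLSR φ W :=
  lsrIter_subset_fLSR φ W (#W + 1) (mem_union_right _ (mem_filter.mpr ⟨hx, a, ha, hax⟩))

theorem fLSR_subset_of_closed (S : Set α) (hself : ∀ a ∈ W, φ a a = true → a ∈ S)
    (hclosed : ∀ a ∈ S, ∀ x ∈ W, φ a x = true → x ∈ S) : ↑(fLSR φ W) ⊆ S := by
  suffices ∀ n, ↑(lsrIter φ W n) ⊆ S from this _
  intro n
  induction n with
  | zero =>
    intro a ha
    obtain ⟨haW, haa⟩ := mem_filter.mp ha
    exact hself a haW haa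
  | succ n ih =>
    intro a ha
    rcases mem_union.mp ha with ha | ha
    · exact ih ha
    · obtain ⟨haW, a', ha', hq⟩ := mem_filter.mp ha
      exact hclosed a' (ih ha') a haW hq

end LSR

section Reduction

variable {V α : Type*} [DecidableEq α]

theorem mem_of_self_qualified (R B : Finset V) (adj : V → V → Prop) (ι : V → α)
    (C : V → Finset α) (φ : α → α → Bool) (U : Finset α)
    (hCι : ∀ r ∈ R, ∀ b ∈ B, ι b ∉ C r)
    (hφc : ∀ r ∈ R, ∀ c ∈ C r, ∃ b ∈ B, adj r b ∧ ∀ x : α, (φ c x = true ↔ x = ι b))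
    (hφB : ∀ b ∈ B, ∀ x : α, φ (ι b) x = false)
    {a : α} (ha : a ∈ (B.image ι ∪ R.biUnion C) ∪ U) (haa : φ a a = true) : a ∈ U := by
  rcases mem_union.mp ha with ha | ha
  · rcases mem_union.mp ha with ha | ha
    · obtain ⟨b, hb, rfl⟩ := mem_image.mp ha
      simp [hφB b hb] at haa
    · obtain ⟨r, hr, hc⟩ := mem_biUnion.mp ha
      obtain ⟨b, hb, -, hcb⟩ := hφc r hr a hc
      exact absurd ((hcb a).mp haa ▸ hc) (hCι r hr b hb)
  · exact ha

theorem exists_adj_of_mem_fLSR (R B : Finset V) (adj : V → V → Prop) (ι : V → α) (z : V → α)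
    (C : V → Finset α) (φ : α → α → Bool)
    (hι : ∀ b ∈ B, ∀ b' ∈ B, ι b = ι b' → b = b')
    (hzT : ∀ r ∈ R, z r ∉ B.image ι ∪ R.biUnion C)
    (hCι : ∀ r ∈ R, ∀ b ∈ B, ι b ∉ C r)
    (hφz : ∀ r ∈ R, ∀ x : α, (φ (z r) x = true ↔ x = z r ∨ x ∈ C r))
    (hφc : ∀ r ∈ R, ∀ c ∈ C r, ∃ b ∈ B, adj r b ∧ ∀ x : α, (φ c x = true ↔ x = ι b))
    (hφB : ∀ b ∈ B, ∀ x : α, φ (ι b) x = false)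
    {U : Finset α} (hU : U ⊆ R.image z) {b : V} (hb : b ∈ B)
    (hbW : ι b ∈ fLSR φ ((B.image ι ∪ R.biUnion C) ∪ U)) :
    ∃ r ∈ R, adj r b ∧ z r ∈ U := by
  set S : Set α := {a | a ∈ U ∨ (∃ r ∈ R, z r ∈ U ∧ a ∈ C r) ∨
    ∃ b ∈ B, a = ι b ∧ ∃ r ∈ R, adj r b ∧ z r ∈ U}
  have hclosed : ∀ a ∈ S, ∀ x, φ a x = true → x ∈ S := by
    rintro a (haU | ⟨r, hr, hzU, hac⟩ | ⟨b, hb, rfl, -⟩) x hax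
    · obtain ⟨r, hr, rfl⟩ := mem_image.mp (hU haU)
      rcases (hφz r hr x).mp hax with rfl | hxc
      · exact Or.inl haU
      · exact Or.inr (Or.inl ⟨r, hr, haU, hxc⟩)
    · obtain ⟨b, hb, hadj, hcb⟩ := hφc r hr a hac
      exact Or.inr (Or.inr ⟨b, hb, (hcb x).mp hax, r, hr, hadj, hzU⟩)
    · simp [hφB b hb] at hax
  have hbS := fLSR_subset_of_closed φ _ S
    (fun a ha haa => Or.inl (mem_of_self_qualified R B adj ι C φ U hCι hφc hφB ha haa))
    (fun a ha x _ hax => hclosed a ha x hax) hbW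
  rcases hbS with hbU | ⟨r, hr, -, hbC⟩ | ⟨b', hb', hbb', r, hr, hadj, hzU⟩
  · obtain ⟨r, hr, hzb⟩ := mem_image.mp (hU hbU)
    exact absurd (mem_union_left _ (hzb ▸ mem_image_of_mem ι hb)) (hzT r hr)
  · exact absurd hbC (hCι r hr b hb)
  · exact ⟨r, hr, hι b hb b' hb' hbb' ▸ hadj, hzU⟩

theorem mem_fLSR_of_adj (R B : Finset V) (adj : V → V → Prop) (ι : V → α) (z : V → α)
    (C : V → Finset α) (φ : α → α → Bool)
    (hφz : ∀ r ∈ R, ∀ x : α, (φ (z r) x = true ↔ x = z r ∨ x ∈ C r))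
    (hφbc : ∀ r ∈ R, ∀ b ∈ B, adj r b → ∃! c, c ∈ C r ∧ φ c (ι b) = true)
    (U : Finset α) {r b : V} (hr : r ∈ R) (hb : b ∈ B) (hadj : adj r b) (hzU : z r ∈ U) :
    ι b ∈ fLSR φ ((B.image ι ∪ R.biUnion C) ∪ U) := by
  set W := (B.image ι ∪ R.biUnion C) ∪ U
  obtain ⟨c, ⟨hcC, hcb⟩, -⟩ := hφbc r hr b hb hadj
  have hz : z r ∈ fLSR φ W :=
    mem_fLSR_of_self φ W (mem_union_right _ hzU) ((hφz r hr _).mpr (Or.inl rfl))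
  have hc : c ∈ fLSR φ W :=
    mem_fLSR_of_qualified φ W hz (mem_union_left _ (mem_union_right _ (mem_biUnion.mpr
      ⟨r, hr, hcC⟩))) ((hφz r hr c).mpr (Or.inr hcC))
  exact mem_fLSR_of_qualified φ W hc
    (mem_union_left _ (mem_union_left _ (mem_image_of_mem ι hb))) hcb

end Reduction

theorem rbds_to_gcai_lsr_correct_general
    {V α : Type*} [DecidableEq α]
    (R B : Finset V) (adj : V → V → Prop)
    (ι : V → α) (z : V → α) (C : V → Finset α)
    (φ : α → α → Bool)
    (hι : ∀ b ∈ B, ∀ b' ∈ B, ι b = ι b' → b = b')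
    (hzT : ∀ r ∈ R, z r ∉ B.image ι ∪ R.biUnion C)
    (hCι : ∀ r ∈ R, ∀ b ∈ B, ι b ∉ C r)
    (hφz : ∀ r ∈ R, ∀ x : α, (φ (z r) x = true ↔ x = z r ∨ x ∈ C r))
    (hφc : ∀ r ∈ R, ∀ c ∈ C r, ∃ b ∈ B, adj r b ∧ ∀ x : α, (φ c x = true ↔ x = ι b))
    (hφbc : ∀ r ∈ R, ∀ b ∈ B, adj r b → ∃! c, c ∈ C r ∧ φ c (ι b) = true)
    (hφB : ∀ b ∈ B, ∀ x : α, φ (ι b) x = false) :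
    ∀ U ⊆ R.image z,
      (B.image ι ⊆ fLSR φ ((B.image ι ∪ R.biUnion C) ∪ U) ↔
        ∀ b ∈ B, ∃ r ∈ R, adj r b ∧ z r ∈ U) := by
  intro U hU
  constructor
  · intro hcover b hb
    exact exists_adj_of_mem_fLSR R B adj ι z C φ hι hzT hCι hφz hφc hφB hU hb
      (hcover (mem_image_of_mem ι hb))
  · intro hdom x hx
    obtain ⟨b, hb, rfl⟩ := mem_image.mp hx
    obtain ⟨r, hr, hadj, hzU⟩ := hdom b hb
    exact mem_fLSR_of_adj R B adj ι z C φ hφz hφbc U hr hb hadj hzU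

theorem rbds_to_gcai_lsr_correct
    {V α : Type*} [DecidableEq V] [DecidableEq α]
    (R B : Finset V) (adj : V → V → Prop)
    (ι : V → α) (z : V → α) (C : V → Finset α)
    (φ : α → α → Bool)
    (hι : ∀ b ∈ B, ∀ b' ∈ B, ι b = ι b' → b = b')
    (hz : ∀ r ∈ R, ∀ r' ∈ R, z r = z r' → r = r')
    (hzT : ∀ r ∈ R, z r ∉ B.image ι ∪ R.biUnion C)
    (hCdisj : ∀ r ∈ R, ∀ r' ∈ R, r ≠ r' → Disjoint (C r) (C r'))
    (hCι : ∀ r ∈ R, ∀ b ∈ B, ι b ∉ C r)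
    (hφz : ∀ r ∈ R, ∀ x : α, (φ (z r) x = true ↔ x = z r ∨ x ∈ C r))
    (hφc : ∀ r ∈ R, ∀ c ∈ C r, ∃ b ∈ B, adj r b ∧ ∀ x : α, (φ c x = true ↔ x = ι b))
    (hφbc : ∀ r ∈ R, ∀ b ∈ B, adj r b → ∃! c, c ∈ C r ∧ φ c (ι b) = true)
    (hφB : ∀ b ∈ B, ∀ x : α, φ (ι b) x = false) :
    ∀ U ⊆ R.image z,
      (B.image ι ⊆ fLSR φ ((B.image ι ∪ R.biUnion C) ∪ U) ↔
        ∀ b ∈ B, ∃ r ∈ R, adj r b ∧ z r ∈ U) :=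
  rbds_to_gcai_lsr_correct_general R B adj ι z C φ hι hzT hCι hφz hφc hφbc hφB
end

section
/- Let φ be a profile over a finite set N with f^CSR(φ, N) ≠ ∅, let T ⊆ N and suppose a* ∈ T is qualified by every individual in N. Then for any U ⊆ N \ T and any a ∈ N: a ∈ f^CSR(φ, T ∪ U) if and only if a ∈ T ∪ U and there is a directed path in the incidence digraph of φ restricted to T ∪ U from a* to a (allowing the trivial path when a = a*). -/
open Finset

lemma csrIter_subset_s13 {α : Type*} [DecidableEq α] (φ : α → α → Bool) (W : Finset α) :
    ∀ n, csrIter φ W n ⊆ W := by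
  intro n
  induction n with
  | zero => exact Finset.filter_subset _ _
  | succ n ih =>
      intro a ha
      rcases Finset.mem_union.1 ha with h | h
      · exact ih h
      · exact Finset.mem_of_mem_filter _ h

lemma csrIter_mono_succ {α : Type*} [DecidableEq α] (φ : α → α → Bool) (W : Finset α)
    (n : ℕ) : csrIter φ W n ⊆ csrIter φ W (n + 1) :=
  Finset.subset_union_left

lemma csrIter_mono {α : Type*} [DecidableEq α] (φ : α → α → Bool) (W : Finset α)
    {m n : ℕ} (h : m ≤ n) : csrIter φ W m ⊆ csrIter φ W n := by
  induction n with
  | zero => simpa [Nat.le_zero.1 h]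
  | succ n ih =>
      rcases Nat.lt_or_ge m (n + 1) with h' | h'
      · exact (ih (Nat.lt_succ_iff.1 h')).trans (csrIter_mono_succ φ W n)
      · have : m = n + 1 := le_antisymm h h'
        simp [this]

lemma csrIter_fix {α : Type*} [DecidableEq α] (φ : α → α → Bool) (W : Finset α)
    {n : ℕ} (h : csrIter φ W (n + 1) = csrIter φ W n) :
    ∀ k, csrIter φ W (n + k) = csrIter φ W n := by
  intro k
  induction k with
  | zero => rfl
  | succ k ih =>
      have : csrIter φ W (n + k + 1) = csrStep φ W (csrIter φ W (n + k)) := rfl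
      rw [show n + (k+1) = (n + k) + 1 from rfl, this, ih]
      exact h

lemma csrIter_stab {α : Type*} [DecidableEq α] (φ : α → α → Bool) (W : Finset α)
    {m : ℕ} (h : W.card ≤ m) : csrIter φ W m = csrIter φ W W.card := by
  -- there exists n ≤ W.card with csrIter (n+1) = csrIter n
  by_cases hfix : ∃ n ≤ W.card, csrIter φ W (n + 1) = csrIter φ W n
  · obtain ⟨n, hn, hfx⟩ := hfix
    have h1 := csrIter_fix φ W hfx (m - n)
    have h2 := csrIter_fix φ W hfx (W.card - n)
    rw [Nat.add_sub_cancel' (hn.trans h)] at h1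
    rw [Nat.add_sub_cancel' hn] at h2
    rw [h1, h2]
  · push_neg at hfix
    exfalso
    have key : ∀ k ≤ W.card + 1, k ≤ (csrIter φ W k).card := by
      intro k
      induction k with
      | zero => intro _; exact Nat.zero_le _
      | succ k ih =>
          intro hk
          have hk' : k ≤ W.card := Nat.lt_succ_iff.1 (Nat.lt_of_succ_le hk)
          have h1 : k ≤ (csrIter φ W k).card := ih (hk'.trans (Nat.le_succ _))
          have hne : csrIter φ W (k + 1) ≠ csrIter φ W k := hfix k hk'
          have hss : csrIter φ W k ⊂ csrIter φ W (k + 1) :=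
            (Finset.ssubset_iff_of_subset (csrIter_mono_succ φ W k)).2 (by
              by_contra hc
              push_neg at hc
              exact hne (Finset.Subset.antisymm (fun x hx => by
                by_contra hx'
                exact hx' (by
                  exact absurd hx (by
                    intro hxx
                    exact hx' (hc x hxx)))) (csrIter_mono_succ φ W k)))
          have := Finset.card_lt_card hss
          omega
    have := key (W.card + 1) le_rfl
    have hle := Finset.card_le_card (csrIter_subset_s13 φ W (W.card + 1))
    omega

theorem csr_merging_correct
    {α : Type*} [DecidableEq α] [Fintype α] (φ : α → α → Bool)
    (T : Finset α) (astar : α) (hs : astar ∈ T)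
    (hq : ∀ b : α, φ b astar = true) :
    ∀ U : Finset α, Disjoint U T → ∀ a : α,
      (a ∈ fCSR φ (T ∪ U) ↔ a ∈ T ∪ U ∧
        Relation.ReflTransGen
          (fun x y => x ∈ T ∪ U ∧ y ∈ T ∪ U ∧ φ x y = true) astar a) := by
  intro U _hdis a
  set W := T ∪ U with hW
  have hastarW : astar ∈ W := Finset.mem_union_left _ hs
  constructor
  · intro ha
    -- forward: induction on iterations
    have main : ∀ n, ∀ b ∈ csrIter φ W n, b ∈ W ∧
        Relation.ReflTransGen (fun x y => x ∈ W ∧ y ∈ W ∧ φ x y = true) astar b := by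
      intro n
      induction n with
      | zero =>
          intro b hb
          simp only [csrIter, Finset.mem_filter] at hb
          exact ⟨hb.1, Relation.ReflTransGen.single ⟨hastarW, hb.1, hb.2 astar hastarW⟩⟩
      | succ n ih =>
          intro b hb
          rcases Finset.mem_union.1 hb with h | h
          · exact ih b h
          · rw [Finset.mem_filter] at h
            obtain ⟨hbW, a', ha', hφ⟩ := h
            obtain ⟨ha'W, hpath⟩ := ih a' ha'
            exact ⟨hbW, hpath.tail ⟨ha'W, hbW, hφ⟩⟩
    exact main _ a ha
  · rintro ⟨haW, hpath⟩
    clear haW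
    have main : ∃ m, a ∈ csrIter φ W m := by
      induction hpath with
      | refl =>
          refine ⟨0, ?_⟩
          simp only [csrIter, Finset.mem_filter]
          exact ⟨hastarW, fun a' _ => hq a'⟩
      | @tail b c hbc hedge ih =>
          obtain ⟨m, hm⟩ := ih
          exact ⟨m + 1, Finset.mem_union_right _ (Finset.mem_filter.2
            ⟨hedge.2.1, b, hm, hedge.2.2⟩)⟩
    obtain ⟨m, hm⟩ := main
    rcases Nat.le_total m W.card with h | h
    · exact csrIter_mono φ W h hm
    · rw [fCSR, ← csrIter_stab φ W h]; exact hm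
end

section
/- Equivalence of the DVWST-to-DST reduction: Let G be a digraph, X ⊆ V(G) a set of terminals, u ∈ V(G) \ X a root, w : V(G) → ℕ a vertex weight function, and p ∈ ℕ. Construct the digraph G' by replacing each vertex v ∈ V(G) \ (X ∪ {u}) by two vertices v_in, v_out with an arc (v_in, v_out) of weight w(v), where the in-neighbors of v_in are the in-neighbors of v in G and the out-neighbors of v_out are the out-neighbors of v in G, and all other arcs have weight 0. Then there exists J ⊆ V(G) \ (X ∪ {u}) with Σ_{v∈J} w(v) ≤ p such that in the subgraph of G induced by J ∪ X ∪ {u} every terminal x ∈ X is reachable from u, if and only if there exists a set J' of arcs of G' with total weight at most p such that every terminal x ∈ X is reachable from u in the subgraph of G' formed by the arcs of J'. -/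
open Finset

/-- The arc relation of the digraph G' obtained from G (with arc relation E)
by splitting each vertex v ∉ X ∪ {u} into v_in = Sum.inl v and v_out = Sum.inr v;
vertices in X ∪ {u} are kept as Sum.inl v. -/
def splitArc {V : Type*} [DecidableEq V] (E : V → V → Prop) (X : Finset V) (u : V) :
    (V ⊕ V) → (V ⊕ V) → Prop := fun p q =>
  (∃ a b : V, E a b ∧
      p = (if a ∈ X ∨ a = u then Sum.inl a else Sum.inr a) ∧ q = Sum.inl b) ∨
  (∃ v : V, ¬(v ∈ X ∨ v = u) ∧ p = Sum.inl v ∧ q = Sum.inr v)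

/-- The arc weights of G': the arc (v_in, v_out) of a split vertex v has weight w(v),
all other arcs have weight 0. -/
def splitWeight {V : Type*} [DecidableEq V] (X : Finset V) (u : V) (w : V → ℕ) :
    (V ⊕ V) → (V ⊕ V) → ℕ
  | Sum.inl a, Sum.inr b => if a = b ∧ ¬(a ∈ X ∨ a = u) then w a else 0
  | _, _ => 0

/-!
A subgraph of `G'` reaching the terminals uses a split vertex `v` only through its arc
`(v_in, v_out)`: the vertex `v_in` has no other out-arc, so a walk to a kept vertex that enters
`v_in` continues through `v_out`. Hence `J ↦ {(v_in, v_out) | v ∈ J}` together with the images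
of the arcs of `G[J ∪ X ∪ {u}]` turns a solution of the vertex-weighted problem into one of the
arc-weighted problem of the same weight, and conversely the split vertices whose split arc is
chosen form a solution of no larger weight: along a walk in `G'` read backwards from a terminal,
every vertex of `G` it passes through lies in `J ∪ X ∪ {u}`.
-/

open Relation

section SplitDigraph

variable {V : Type*}

def splitArcs (J : Finset V) : Finset ((V ⊕ V) × (V ⊕ V)) :=
  J.map ⟨fun v => (.inl v, .inr v), fun _ _ h => Sum.inl_injective (congrArg Prod.fst h)⟩

lemma mem_splitArcs {J : Finset V} {v : V} :
    ((.inl v, .inr v) : (V ⊕ V) × (V ⊕ V)) ∈ splitArcs J ↔ v ∈ J :=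
  mem_map' _

variable [DecidableEq V] {E : V → V → Prop} {X : Finset V} {u : V}

/-- The copy of `a` in `G'` carrying the out-arcs of `a`. -/
def outCopy (X : Finset V) (u a : V) : V ⊕ V :=
  if a ∈ X ∨ a = u then .inl a else .inr a

lemma splitArc_outCopy_inl {a b : V} (h : E a b) : splitArc E X u (outCopy X u a) (.inl b) :=
  .inl ⟨a, b, h, rfl, rfl⟩

lemma splitArc_inl_inr {v : V} (hv : ¬(v ∈ X ∨ v = u)) : splitArc E X u (.inl v) (.inr v) :=
  .inr ⟨v, hv, rfl, rfl⟩

lemma eq_inr_of_splitArc_inl {v : V} {q : V ⊕ V} (hv : ¬(v ∈ X ∨ v = u))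
    (h : splitArc E X u (.inl v) q) : q = .inr v := by
  rcases h with ⟨a, b, -, ha, -⟩ | ⟨v', -, hv', rfl⟩
  · by_cases hka : a ∈ X ∨ a = u
    · rw [if_pos hka, Sum.inl.injEq] at ha
      exact absurd (ha ▸ hka) hv
    · rw [if_neg hka] at ha
      exact absurd ha Sum.inl_ne_inr
  · rw [Sum.inl_injective hv']

lemma splitWeight_inl_right (w : V → ℕ) (z : V ⊕ V) (b : V) :
    splitWeight X u w z (.inl b) = 0 := by
  cases z <;> rfl

lemma splitWeight_inl_inr (w : V → ℕ) {v : V} (hv : ¬(v ∈ X ∨ v = u)) :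
    splitWeight X u w (.inl v) (.inr v) = w v := by
  simp [splitWeight, hv]

lemma sum_splitWeight_splitArcs (w : V → ℕ) {J : Finset V} (hJ : ∀ v ∈ J, ¬(v ∈ X ∨ v = u)) :
    ∑ e ∈ splitArcs J, splitWeight X u w e.1 e.2 = ∑ v ∈ J, w v := by
  rw [splitArcs, sum_map]
  exact sum_congr rfl fun v hv => splitWeight_inl_inr w (hJ v hv)

section Forward

variable [DecidableRel E]

/-- The arcs of `G'` used to simulate the subgraph of `G` induced by `J ∪ X ∪ {u}`. -/
def liftArcs (E : V → V → Prop) [DecidableRel E] (X : Finset V) (u : V) (J : Finset V) :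
    Finset ((V ⊕ V) × (V ⊕ V)) :=
  (((J ∪ X ∪ {u}) ×ˢ (J ∪ X ∪ {u})).filter fun e => E e.1 e.2).image
      (fun e => (outCopy X u e.1, .inl e.2)) ∪ splitArcs J

variable {J : Finset V}

lemma splitArc_of_mem_liftArcs (hJ : ∀ v ∈ J, ¬(v ∈ X ∨ v = u)) {e : (V ⊕ V) × (V ⊕ V)}
    (he : e ∈ liftArcs E X u J) : splitArc E X u e.1 e.2 := by
  simp only [liftArcs, mem_union, mem_image, mem_filter, splitArcs, mem_map] at he
  rcases he with ⟨⟨a, b⟩, ⟨-, hab⟩, rfl⟩ | ⟨v, hv, rfl⟩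
  · exact splitArc_outCopy_inl hab
  · exact splitArc_inl_inr (hJ v hv)

lemma sum_splitWeight_liftArcs_le (w : V → ℕ) :
    ∑ e ∈ liftArcs E X u J, splitWeight X u w e.1 e.2 ≤
      ∑ e ∈ splitArcs J, splitWeight X u w e.1 e.2 := by
  refine sum_le_sum_of_ne_zero fun e he hw => ?_
  simp only [liftArcs, mem_union, mem_image] at he
  rcases he with ⟨a, -, rfl⟩ | he
  · exact absurd (splitWeight_inl_right w _ _) hw
  · exact he

lemma reflTransGen_liftArcs {a b : V} (ha : a ∈ J ∨ a ∈ X ∨ a = u)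
    (hb : b ∈ J ∨ b ∈ X ∨ b = u) (hab : E a b) :
    ReflTransGen (fun p q => (p, q) ∈ liftArcs E X u J) (.inl a) (.inl b) := by
  have hout : ((outCopy X u a, .inl b) : (V ⊕ V) × (V ⊕ V)) ∈ liftArcs E X u J := by
    refine mem_union_left _ (mem_image.2 ⟨(a, b), mem_filter.2 ⟨?_, hab⟩, rfl⟩)
    simp only [mem_product, mem_union, mem_singleton]
    tauto
  by_cases hka : a ∈ X ∨ a = u
  · rw [outCopy, if_pos hka] at hout
    exact .single hout
  · rw [outCopy, if_neg hka] at hout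
    have hsplit : ((.inl a, .inr a) : (V ⊕ V) × (V ⊕ V)) ∈ liftArcs E X u J :=
      mem_union_right _ (mem_splitArcs.2 (ha.resolve_right hka))
    exact (ReflTransGen.single hsplit).tail hout

end Forward

section Backward

def splitVertices (X : Finset V) (u : V) (J' : Finset ((V ⊕ V) × (V ⊕ V))) : Finset V :=
  (J'.image Prod.fst).toLeft.filter fun v => (.inl v, .inr v) ∈ J' ∧ ¬(v ∈ X ∨ v = u)

variable {J' : Finset ((V ⊕ V) × (V ⊕ V))}

lemma mem_splitVertices {v : V} :
    v ∈ splitVertices X u J' ↔ (.inl v, .inr v) ∈ J' ∧ ¬(v ∈ X ∨ v = u) := by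
  rw [splitVertices, mem_filter, mem_toLeft, and_iff_right_iff_imp]
  exact fun h => mem_image_of_mem Prod.fst h.1

lemma splitArcs_splitVertices_subset : splitArcs (splitVertices X u J') ⊆ J' := by
  intro e he
  obtain ⟨v, hv, rfl⟩ := mem_map.1 he
  exact (mem_splitVertices.1 hv).1

lemma sum_splitVertices_le_sum_splitWeight (w : V → ℕ) :
    ∑ v ∈ splitVertices X u J', w v ≤ ∑ e ∈ J', splitWeight X u w e.1 e.2 := by
  rw [← sum_splitWeight_splitArcs w fun v hv => (mem_splitVertices.1 hv).2]
  exact sum_le_sum_of_subset splitArcs_splitVertices_subset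

variable (hJ' : ∀ e ∈ J', splitArc E X u e.1 e.2)
include hJ'

lemma mem_splitVertices_of_reflTransGen {b x : V} (hx : x ∈ X ∨ x = u) (hb : ¬(b ∈ X ∨ b = u))
    (h : ReflTransGen (fun p q => (p, q) ∈ J') (.inl b) (.inl x)) : b ∈ splitVertices X u J' := by
  rcases h.cases_head with h | ⟨q, hbq, -⟩
  · exact absurd (Sum.inl_injective h ▸ hx) hb
  · obtain rfl := eq_inr_of_splitArc_inl hb (hJ' _ hbq)
    exact mem_splitVertices.2 ⟨hbq, hb⟩

lemma reflTransGen_of_reflTransGen_split {x : V} (hx : x ∈ X ∨ x = u) {z : V ⊕ V}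
    (h : ReflTransGen (fun p q => (p, q) ∈ J') z (.inl x))
    (hz : Sum.elim id id z ∈ splitVertices X u J' ∨ Sum.elim id id z ∈ X ∨ Sum.elim id id z = u) :
    ReflTransGen (fun a b => (a ∈ splitVertices X u J' ∨ a ∈ X ∨ a = u) ∧
      (b ∈ splitVertices X u J' ∨ b ∈ X ∨ b = u) ∧ E a b) (Sum.elim id id z) x := by
  induction h using ReflTransGen.head_induction_on with
  | refl => exact .refl
  | head hzz' hz'x ih =>
    rcases hJ' _ hzz' with ⟨a, b, hab, rfl, rfl⟩ | ⟨v, -, rfl, rfl⟩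
    · have hb : b ∈ splitVertices X u J' ∨ b ∈ X ∨ b = u := by
        by_cases hkb : b ∈ X ∨ b = u
        · exact .inr hkb
        · exact .inl (mem_splitVertices_of_reflTransGen hJ' hx hkb hz'x)
      have hza : Sum.elim id id (if a ∈ X ∨ a = u then .inl a else .inr a : V ⊕ V) = a := by
        split_ifs <;> rfl
      rw [hza] at hz ⊢
      exact .head ⟨hz, hb, hab⟩ (ih hb)
    · exact ih hz

end Backward

end SplitDigraph

theorem dvwst_to_dst_correct_general
    {V : Type*} [DecidableEq V]
    (E : V → V → Prop) (X : Finset V) (u : V)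
    (w : V → ℕ) (p : ℕ) :
    (∃ J : Finset V, (∀ v ∈ J, v ∉ X ∧ v ≠ u) ∧ (∑ v ∈ J, w v) ≤ p ∧
        ∀ x ∈ X, Relation.ReflTransGen
          (fun a b => (a ∈ J ∨ a ∈ X ∨ a = u) ∧ (b ∈ J ∨ b ∈ X ∨ b = u) ∧ E a b) u x)
    ↔
    (∃ J' : Finset ((V ⊕ V) × (V ⊕ V)),
        (∀ e ∈ J', splitArc E X u e.1 e.2) ∧
        (∑ e ∈ J', splitWeight X u w e.1 e.2) ≤ p ∧
        ∀ x ∈ X, Relation.ReflTransGen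
          (fun a b => (a, b) ∈ J') (Sum.inl u) (Sum.inl x)) := by
  classical
  constructor
  · rintro ⟨J, hJ, hw, hreach⟩
    have hsplit : ∀ v ∈ J, ¬(v ∈ X ∨ v = u) := fun v hv h => h.elim (hJ v hv).1 (hJ v hv).2
    refine ⟨liftArcs E X u J, fun e he => splitArc_of_mem_liftArcs hsplit he, ?_, fun x hx => ?_⟩
    · calc _ ≤ ∑ e ∈ splitArcs J, splitWeight X u w e.1 e.2 := sum_splitWeight_liftArcs_le w
        _ = ∑ v ∈ J, w v := sum_splitWeight_splitArcs w hsplit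
        _ ≤ p := hw
    · exact (hreach x hx).lift' Sum.inl fun a b ⟨ha, hb, hab⟩ => reflTransGen_liftArcs ha hb hab
  · rintro ⟨J', hJ', hw, hreach⟩
    exact ⟨splitVertices X u J', fun v hv => not_or.1 (mem_splitVertices.1 hv).2,
      (sum_splitVertices_le_sum_splitWeight w).trans hw, fun x hx =>
        reflTransGen_of_reflTransGen_split hJ' (.inl hx) (hreach x hx) (.inr (.inr rfl))⟩

theorem dvwst_to_dst_correct
    {V : Type*} [DecidableEq V] [Fintype V]
    (E : V → V → Prop) (X : Finset V) (u : V) (hu : u ∉ X)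
    (w : V → ℕ) (p : ℕ) :
    (∃ J : Finset V, (∀ v ∈ J, v ∉ X ∧ v ≠ u) ∧ (∑ v ∈ J, w v) ≤ p ∧
        ∀ x ∈ X, Relation.ReflTransGen
          (fun a b => (a ∈ J ∨ a ∈ X ∨ a = u) ∧ (b ∈ J ∨ b ∈ X ∨ b = u) ∧ E a b) u x)
    ↔
    (∃ J' : Finset ((V ⊕ V) × (V ⊕ V)),
        (∀ e ∈ J', splitArc E X u e.1 e.2) ∧
        (∑ e ∈ J', splitWeight X u w e.1 e.2) ≤ p ∧
        ∀ x ∈ X, Relation.ReflTransGen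
          (fun a b => (a, b) ∈ J') (Sum.inl u) (Sum.inl x)) :=
  dvwst_to_dst_correct_general E X u w p
end

section
/- In a DQC profile, two individuals suffice to qualify everyone: Let φ be a profile over a finite set N = {a_1, …, a_n} (ordered by a linear order ▷) that is disqualifying consecutive with respect to ▷, i.e., for every a ∈ N the set {a' : φ(a, a') = 0} is an interval in ▷. Suppose every individual in N disqualifies at least one individual. Then for every subset Z ⊆ N there exists a set X ⊆ N with |X| ≤ 2 such that every individual qualified by some member of Z is also qualified by some member of X; in particular, X can be chosen independently of Z (depending only on φ). -/
open Finset

-- Take the interval with the largest left end and the one with the smallest right end.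
theorem exists_pair_inter_subset_of_ordConnected {ι α : Type*} [Fintype ι] [Nonempty ι]
    [LinearOrder α] (D : ι → Finset α) (hne : ∀ a, (D a).Nonempty)
    (hconv : ∀ a, (D a : Set α).OrdConnected) :
    ∃ x₁ x₂, ∀ z, D x₁ ∩ D x₂ ⊆ D z := by
  obtain ⟨x₁, -, hx₁⟩ := exists_max_image univ (fun a => (D a).min' (hne a)) univ_nonempty
  obtain ⟨x₂, -, hx₂⟩ := exists_min_image univ (fun a => (D a).max' (hne a)) univ_nonempty
  refine ⟨x₁, x₂, fun z b hb => ?_⟩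
  rw [mem_inter] at hb
  exact (hconv z).out (min'_mem _ _) (max'_mem _ _)
    ⟨(hx₁ z (mem_univ _)).trans (min'_le _ _ hb.1), (le_max' _ _ hb.2).trans (hx₂ z (mem_univ _))⟩

theorem dqc_two_individuals_suffice
    {α : Type*} [LinearOrder α] [Fintype α] (φ : α → α → Bool)
    (hdqc : ∀ a x y w : α, x ≤ w → w ≤ y → φ a x = false → φ a y = false → φ a w = false)
    (hdis : ∀ a : α, ∃ a' : α, φ a a' = false) :
    ∃ X : Finset α, X.card ≤ 2 ∧
      ∀ (Z : Finset α) (b : α), (∃ z ∈ Z, φ z b = true) → ∃ x ∈ X, φ x b = true := by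
  classical
  cases isEmpty_or_nonempty α
  · exact ⟨∅, by simp, fun _ b => isEmptyElim b⟩
  set D : α → Finset α := fun a => univ.filter (fun x => φ a x = false)
  have hne : ∀ a, (D a).Nonempty := fun a =>
    let ⟨a', ha'⟩ := hdis a
    ⟨a', by simp [D, ha']⟩
  have hconv : ∀ a, (D a : Set α).OrdConnected := fun a =>
    ⟨fun x hx y hy w hw => by
      simp only [D, coe_filter, mem_univ, true_and, Set.mem_ofPred_eq] at hx hy ⊢
      exact hdqc a x y w hw.1 hw.2 hx hy⟩
  obtain ⟨x₁, x₂, hinter⟩ := exists_pair_inter_subset_of_ordConnected D hne hconv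
  refine ⟨{x₁, x₂}, card_le_two, ?_⟩
  rintro Z b ⟨z, -, hz⟩
  by_contra! h
  have hb : b ∈ D x₁ ∩ D x₂ := by simpa [D] using h
  simpa [D, hz] using hinter z hb
end
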